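/- Fix a seed set S ⊆ V, a set A of added edges disjoint from E, a candidate edge e = ⟨u, v⟩ ∉ E ∪ A with u ∈ S and probability p_{u,v} ∈ [0,1], and an integer θ ≥ 1. Let R_1, …, R_θ be independent random RR sets generated on the augmented graph with edge set E ∪ A, and let Δ_𝓡(v) be the number of R_i containing v but disjoint from S. Then the expectation of (n · p_{u,v} / θ) · Δ_𝓡(v) equals σ(A ∪ {e}, S) − σ(A, S). -/

import Mathlib

open scoped Classical

noncomputable section

/-- The set of nodes reachable from some node of `S` via edges of `g`
(every node reaches itself). -/
def Reach {V : Type*} (S : Finset V) (g : Finset (V × V)) : Set V :=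
  {x | ∃ s ∈ S, Relation.ReflTransGen (fun a b => (a, b) ∈ g) s x}

/-- Probability of the live-edge graph `g ⊆ F`. -/
def liveProb {V : Type*} [DecidableEq V] (F : Finset (V × V)) (p : V × V → ℝ)
    (g : Finset (V × V)) : ℝ :=
  (∏ e ∈ g, p e) * ∏ e ∈ F \ g, (1 - p e)

/-- The expected spread of the seed set `S` over live-edge graphs of edge set `F`. -/
def expSpread {V : Type*} [DecidableEq V] (F : Finset (V × V)) (p : V × V → ℝ)
    (S : Finset V) : ℝ :=
  ∑ g ∈ F.powerset, liveProb F p g * ((Reach S g).ncard : ℝ)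

/-- The reverse reachable set of `w` in `g`. -/
def RR {V : Type*} (w : V) (g : Finset (V × V)) : Set V :=
  {u | w ∈ Reach {u} g}

/-! Adding the edge `(u, v)` out of a seed `u` lets `S` additionally reach exactly the nodes that `v`
reaches, so `σ(A ∪ {e}, S) - σ(A, S) = p_e · 𝔼_g |Reach {v} g \ Reach S g|`. A node `w` lies in that
difference iff its RR set contains `v` and misses `S`; since `w` is uniform, each of the `θ`
independent RR sets contributes this indicator with expectation `𝔼_g |Reach {v} g \ Reach S g| / n`. -/

section Reachability

variable {V : Type*}

theorem reach_insert_of_mem [DecidableEq V] {S : Finset V} {u : V} (hu : u ∈ S) (v : V)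
    (g : Finset (V × V)) : Reach S (insert (u, v) g) = Reach S g ∪ Reach {v} g := by
  have hmono : ∀ a b, (a, b) ∈ g → (a, b) ∈ insert (u, v) g := fun _ _ => Finset.mem_insert_of_mem
  ext x
  constructor
  · rintro ⟨s, hs, hpath⟩
    induction hpath with
    | refl => exact Or.inl ⟨s, hs, .refl⟩
    | @tail b c _ hedge ih =>
      rcases Finset.mem_insert.mp hedge with hnew | hold
      · obtain ⟨-, rfl⟩ := Prod.mk.inj hnew
        exact Or.inr ⟨c, Finset.mem_singleton_self c, .refl⟩
      · rcases ih with ⟨s', hs', hp⟩ | ⟨s', hs', hp⟩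
        · exact Or.inl ⟨s', hs', hp.tail hold⟩
        · exact Or.inr ⟨s', hs', hp.tail hold⟩
  · rintro (⟨s, hs, hp⟩ | ⟨s, hs, hp⟩)
    · exact ⟨s, hs, Relation.ReflTransGen.mono hmono _ _ hp⟩
    · rw [Finset.mem_singleton] at hs
      subst hs
      exact ⟨u, hu, .head (Finset.mem_insert_self _ _) (Relation.ReflTransGen.mono hmono _ _ hp)⟩

theorem reach_subset_union_image_snd (S : Finset V) (g : Finset (V × V)) :
    Reach S g ⊆ ↑S ∪ Prod.snd '' (g : Set (V × V)) := by
  rintro x ⟨s, hs, hpath⟩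
  rcases hpath.cases_tail with rfl | ⟨c, -, hcx⟩
  · exact Or.inl hs
  · exact Or.inr ⟨(c, x), hcx, rfl⟩

theorem finite_reach (S : Finset V) (g : Finset (V × V)) : (Reach S g).Finite :=
  (S.finite_toSet.union (g.finite_toSet.image _)).subset (reach_subset_union_image_snd S g)

theorem rr_inter_eq_empty_iff (w : V) (g : Finset (V × V)) (S : Finset V) :
    RR w g ∩ (S : Set V) = ∅ ↔ w ∉ Reach S g := by
  simp only [Set.eq_empty_iff_forall_notMem, Set.mem_inter_iff, RR, Reach, Set.mem_ofPred_eq,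
    Finset.mem_singleton, Finset.mem_coe, exists_eq_left]
  exact ⟨fun h ⟨s, hs, hp⟩ => h s ⟨hp, hs⟩, fun h s ⟨hp, hs⟩ => h ⟨s, hs, hp⟩⟩

theorem card_filter_mem_rr_inter_eq_empty [Fintype V] (S : Finset V) (v : V)
    (g : Finset (V × V)) :
    (Finset.univ.filter (fun w : V => v ∈ RR w g ∧ RR w g ∩ (S : Set V) = ∅)).card
      = (Reach {v} g \ Reach S g).ncard := by
  rw [← Set.ncard_coe_finset]
  congr 1
  ext w
  simp only [Finset.coe_filter, Finset.mem_univ, true_and, Set.mem_ofPred_eq, Set.mem_sdiff,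
    rr_inter_eq_empty_iff]
  rfl

end Reachability

section LiveEdge

variable {V : Type*} [DecidableEq V]

theorem sum_liveProb (F : Finset (V × V)) (p : V × V → ℝ) :
    ∑ g ∈ F.powerset, liveProb F p g = 1 := by
  simpa [liveProb] using (Finset.prod_add p (fun e => 1 - p e) F).symm

theorem liveProb_insert_of_subset {F g : Finset (V × V)} {e : V × V} (p : V × V → ℝ)
    (heF : e ∉ F) (hg : g ⊆ F) :
    liveProb (insert e F) p g = (1 - p e) * liveProb F p g := by
  have heg : e ∉ F \ g := fun h => heF (Finset.mem_sdiff.mp h).1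
  rw [liveProb, liveProb, Finset.insert_sdiff_of_notMem _ (fun h => heF (hg h)),
    Finset.prod_insert heg]
  ring

theorem liveProb_insert_insert {F g : Finset (V × V)} {e : V × V} (p : V × V → ℝ)
    (heF : e ∉ F) (hg : g ⊆ F) :
    liveProb (insert e F) p (insert e g) = p e * liveProb F p g := by
  rw [liveProb, liveProb, Finset.insert_sdiff_insert, Finset.sdiff_insert_of_notMem heF,
    Finset.prod_insert (fun h => heF (hg h))]
  ring

theorem sum_powerset_insert_liveProb_mul {F : Finset (V × V)} {e : V × V} (p : V × V → ℝ)
    (heF : e ∉ F) (f : Finset (V × V) → ℝ) :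
    ∑ g ∈ (insert e F).powerset, liveProb (insert e F) p g * f g
      = ∑ g ∈ F.powerset, liveProb F p g * ((1 - p e) * f g + p e * f (insert e g)) := by
  rw [Finset.sum_powerset_insert heF, ← Finset.sum_add_distrib]
  refine Finset.sum_congr rfl fun g hg => ?_
  have hgF := Finset.mem_powerset.mp hg
  rw [liveProb_insert_of_subset p heF hgF, liveProb_insert_insert p heF hgF]
  ring

theorem expSpread_insert_sub_expSpread {F : Finset (V × V)} (p : V × V → ℝ) {S : Finset V}
    {u v : V} (hu : u ∈ S) (he : (u, v) ∉ F) :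
    expSpread (insert (u, v) F) p S - expSpread F p S
      = p (u, v) * ∑ g ∈ F.powerset, liveProb F p g * ((Reach {v} g \ Reach S g).ncard : ℝ) := by
  have hunion : ∀ g : Finset (V × V), ((Reach S g ∪ Reach {v} g).ncard : ℝ)
      = (Reach S g).ncard + (Reach {v} g \ Reach S g).ncard := fun g => by
    rw [← Set.union_sdiff_self, Set.ncard_union_eq Set.disjoint_sdiff_right
      (finite_reach S g) (finite_reach {v} g).sdiff, Nat.cast_add]
  rw [expSpread, sum_powerset_insert_liveProb_mul p he, expSpread, Finset.mul_sum,
    ← Finset.sum_sub_distrib]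
  refine Finset.sum_congr rfl fun g _ => ?_
  rw [reach_insert_of_mem hu, hunion]
  ring

end LiveEdge

theorem sum_piFinset_prod_mul_apply {ι α R : Type*} [Fintype ι] [DecidableEq ι] [CommSemiring R]
    {s : Finset α} {q : α → R} (hq : ∑ a ∈ s, q a = 1) (f : α → R) (j : ι) :
    ∑ x ∈ Fintype.piFinset (fun _ : ι => s), (∏ i, q (x i)) * f (x j) = ∑ a ∈ s, q a * f a := by
  calc _ = ∑ x ∈ Fintype.piFinset (fun _ : ι => s),
          ∏ i, q (x i) * (if i = j then f (x i) else 1) := by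
        refine Finset.sum_congr rfl fun x _ => ?_
        rw [Finset.prod_mul_distrib, Finset.prod_ite_eq' Finset.univ j, if_pos (Finset.mem_univ j)]
    _ = ∏ i, ∑ a ∈ s, q a * (if i = j then f a else 1) :=
        (Finset.prod_univ_sum (fun _ => s) fun i a => q a * if i = j then f a else 1).symm
    _ = _ := by
        rw [Finset.prod_eq_single j (fun i _ hij => by simp [hij, hq]) (by simp)]
        simp

theorem sum_rr_samples_apply {V : Type*} [Fintype V] [Nonempty V] [DecidableEq V]
    (F : Finset (V × V)) (p : V × V → ℝ) {θ : ℕ} (h : V → Finset (V × V) → ℝ) (j : Fin θ) :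
    ∑ ws : Fin θ → V, ∑ gs ∈ Fintype.piFinset (fun _ : Fin θ => F.powerset),
        (∏ i, (1 / (Fintype.card V : ℝ)) * liveProb F p (gs i)) * h (ws j) (gs j)
      = ∑ w, (1 / (Fintype.card V : ℝ)) * ∑ g ∈ F.powerset, liveProb F p g * h w g := by
  have huniform : ∑ _w : V, 1 / (Fintype.card V : ℝ) = 1 := by
    simp [Finset.card_univ]
  calc _ = ∑ ws : Fin θ → V, (∏ _i : Fin θ, 1 / (Fintype.card V : ℝ)) *
          ∑ gs ∈ Fintype.piFinset (fun _ : Fin θ => F.powerset),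
            (∏ i, liveProb F p (gs i)) * h (ws j) (gs j) := by
        simp only [Finset.prod_mul_distrib, mul_assoc, Finset.mul_sum]
    _ = ∑ ws : Fin θ → V, (∏ _i : Fin θ, 1 / (Fintype.card V : ℝ)) *
          ∑ g ∈ F.powerset, liveProb F p g * h (ws j) g := by
        simp only [sum_piFinset_prod_mul_apply (sum_liveProb F p) (h _)]
    _ = _ := by
        rw [← Fintype.piFinset_univ]
        exact sum_piFinset_prod_mul_apply huniform
          (fun w => ∑ g ∈ F.powerset, liveProb F p g * h w g) j

theorem rr_marginal_gain_unbiased_general {V : Type*} [Fintype V] [DecidableEq V]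
    (E A : Finset (V × V)) (p : V × V → ℝ)
    (S : Finset V) (u v : V) (hu : u ∈ S) (he : (u, v) ∉ E ∪ A)
    (θ : ℕ) (hθ : 1 ≤ θ) :
    (∑ ws : Fin θ → V, ∑ gs ∈ Fintype.piFinset (fun _ : Fin θ => (E ∪ A).powerset),
        (∏ i, (1 / (Fintype.card V : ℝ)) * liveProb (E ∪ A) p (gs i)) *
          (((Fintype.card V : ℝ) * p (u, v) / (θ : ℝ)) *
            ((Finset.univ.filter
                (fun i : Fin θ =>
                  v ∈ RR (ws i) (gs i) ∧ RR (ws i) (gs i) ∩ (S : Set V) = ∅)).card : ℝ)))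
      = expSpread (E ∪ (A ∪ {(u, v)})) p S - expSpread (E ∪ A) p S := by
  have hV : Nonempty V := ⟨u⟩
  have hn : (Fintype.card V : ℝ) ≠ 0 := by positivity
  have hθ' : (θ : ℝ) ≠ 0 := by positivity
  set ind : V → Finset (V × V) → ℝ :=
    fun w g => if v ∈ RR w g ∧ RR w g ∩ (S : Set V) = ∅ then 1 else 0
  have hcount : ∀ (ws : Fin θ → V) (gs : Fin θ → Finset (V × V)),
      ((Finset.univ.filter (fun i : Fin θ =>
        v ∈ RR (ws i) (gs i) ∧ RR (ws i) (gs i) ∩ (S : Set V) = ∅)).card : ℝ)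
        = ∑ i, ind (ws i) (gs i) := fun ws gs => by
    simp only [ind, Finset.card_filter, Nat.cast_sum, Nat.cast_ite, Nat.cast_one, Nat.cast_zero]
  have hind : ∀ g, ∑ w, ind w g = ((Reach {v} g \ Reach S g).ncard : ℝ) := fun g => by
    rw [Finset.sum_boole, card_filter_mem_rr_inter_eq_empty]
  rw [← Finset.union_assoc, Finset.union_singleton, expSpread_insert_sub_expSpread p hu he]
  calc _ = (Fintype.card V * p (u, v) / θ) * ∑ i : Fin θ, ∑ ws : Fin θ → V,
          ∑ gs ∈ Fintype.piFinset (fun _ : Fin θ => (E ∪ A).powerset),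
            (∏ i, (1 / (Fintype.card V : ℝ)) * liveProb (E ∪ A) p (gs i)) * ind (ws i) (gs i) := by
        simp only [hcount, Finset.mul_sum]
        refine (Finset.sum_congr rfl fun _ _ => Finset.sum_comm).trans (Finset.sum_comm.trans ?_)
        exact Finset.sum_congr rfl fun _ _ => Finset.sum_congr rfl fun _ _ =>
          Finset.sum_congr rfl fun _ _ => by ring
    _ = _ := by
        simp only [sum_rr_samples_apply, ← Finset.mul_sum, Finset.sum_const, Finset.card_univ,
          Fintype.card_fin, nsmul_eq_mul]
        rw [Finset.sum_comm]
        simp only [← Finset.mul_sum, hind]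
        field_simp

/-- For a seed set `S`, added edges `A` disjoint from `E`, a candidate edge
`e = ⟨u,v⟩ ∉ E ∪ A` with `u ∈ S`, and `θ ≥ 1` i.i.d. random RR sets `R_i = RR(w_i, g_i)`
generated on the augmented graph `E ∪ A`, the expectation of
`(n · p_{u,v} / θ) · Δ_𝓡(v)` — where `Δ_𝓡(v)` counts the `R_i` containing `v` but
disjoint from `S` — equals `σ(A ∪ {e}, S) − σ(A, S)`. -/
theorem rr_marginal_gain_unbiased {V : Type*} [Fintype V] [DecidableEq V]
    (E A : Finset (V × V)) (p : V × V → ℝ)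
    (hp : ∀ e, 0 ≤ p e ∧ p e ≤ 1)
    (hEA : Disjoint E A)
    (S : Finset V) (u v : V) (hu : u ∈ S) (he : (u, v) ∉ E ∪ A)
    (θ : ℕ) (hθ : 1 ≤ θ) :
    (∑ ws : Fin θ → V, ∑ gs ∈ Fintype.piFinset (fun _ : Fin θ => (E ∪ A).powerset),
        (∏ i, (1 / (Fintype.card V : ℝ)) * liveProb (E ∪ A) p (gs i)) *
          (((Fintype.card V : ℝ) * p (u, v) / (θ : ℝ)) *
            ((Finset.univ.filter
                (fun i : Fin θ =>
                  v ∈ RR (ws i) (gs i) ∧ RR (ws i) (gs i) ∩ (S : Set V) = ∅)).card : ℝ)))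
      = expSpread (E ∪ (A ∪ {(u, v)})) p S - expSpread (E ∪ A) p S :=
  rr_marginal_gain_unbiased_general E A p S u v hu he θ hθ
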